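/- Let μ, ν ∈ ℝ. For every bounded continuous function h : [0,∞) → ℝ, every t > 0 and every x ≥ 0: ∫₀^∞ ∫_{−∞}^{s} h(max(x,s) − b) · ( ∫₀^{max(x,s) − x} e^{−2(ν−μ)r} dr ) · g(t;b,s) db ds = ∫₀^∞ h(y) H(t;x,y) dy. -/

import Mathlib

open MeasureTheory Set Filter

/-- Standard normal density. -/
noncomputable def phi (x : ℝ) : ℝ := (1 / Real.sqrt (2 * Real.pi)) * Real.exp (-x ^ 2 / 2)

/-- Standard normal tail function. -/
noncomputable def Psi (x : ℝ) : ℝ := ∫ y in Set.Ioi x, phi y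

/-- The kernel `G(t;x,y)` with drift parameter `μ`. -/
noncomputable def Gker (μ t x y : ℝ) : ℝ :=
  (1 / Real.sqrt t) *
      (Real.exp (2 * μ * y) * phi ((x + y + μ * t) / Real.sqrt t) +
        phi ((x - y + μ * t) / Real.sqrt t)) -
    2 * μ * Real.exp (2 * μ * y) * Psi ((x + y + μ * t) / Real.sqrt t)

/-- The kernel `H(t;x,y)` with parameters `μ, ν`. -/
noncomputable def Hker (μ ν t x y : ℝ) : ℝ :=
  if ν = μ then
    2 * Real.exp (2 * μ * y) *
      ((1 + μ * (x + y + μ * t)) * Psi ((x + y + μ * t) / Real.sqrt t) -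
        μ * Real.sqrt t * phi ((x + y + μ * t) / Real.sqrt t))
  else
    Real.exp (2 * μ * y) / (ν - μ) *
      ((2 * ν - μ) * Real.exp (2 * (ν - μ) * (x + y + ν * t)) *
          Psi ((x + y + (2 * ν - μ) * t) / Real.sqrt t) -
        μ * Psi ((x + y + μ * t) / Real.sqrt t))

/-- The density `g(t;b,s)` of `(B_t^{-μ}, S_t^{-μ})`, vanishing off `{b ≤ s, 0 ≤ s}`. -/
noncomputable def gker (μ t b s : ℝ) : ℝ :=
  if b ≤ s ∧ 0 ≤ s then
    Real.sqrt (2 / Real.pi) * t ^ (-(3 : ℝ) / 2) * (2 * s - b) *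
      Real.exp (-(2 * s - b) ^ 2 / (2 * t) - μ * (b + μ * t / 2))
  else 0

/-- Spatial derivative (one-sided at `x = 0`). -/
noncomputable def ux (u : ℝ → ℝ → ℝ) (t x : ℝ) : ℝ :=
  derivWithin (fun z => u t z) (Set.Ici 0) x

/-- Second spatial derivative (one-sided at `x = 0`). -/
noncomputable def uxx (u : ℝ → ℝ → ℝ) (t x : ℝ) : ℝ :=
  derivWithin (fun z => ux u t z) (Set.Ici 0) x

/-- Time derivative. -/
noncomputable def ut (u : ℝ → ℝ → ℝ) (t x : ℝ) : ℝ :=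
  deriv (fun s => u s x) t

/-- `u` is a solution of the Stroock–Williams problem with parameters `μ, ν`
and initial data `f`. -/
def IsSWSolution (μ ν : ℝ) (f : ℝ → ℝ) (u : ℝ → ℝ → ℝ) : Prop :=
  ContDiffOn ℝ (⊤ : ℕ∞) (fun p : ℝ × ℝ => u p.1 p.2) (Set.Ioi 0 ×ˢ Set.Ici 0) ∧
  (∀ T > (0 : ℝ),
    ContinuousOn (fun p : ℝ × ℝ => u p.1 p.2) (Set.Icc 0 T ×ˢ Set.Ici 0) ∧
    ContinuousOn (fun p : ℝ × ℝ => ux u p.1 p.2) (Set.Icc 0 T ×ˢ Set.Ici 0) ∧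
    ∃ C : ℝ, ∀ p ∈ Set.Icc (0 : ℝ) T ×ˢ Set.Ici (0 : ℝ),
      |u p.1 p.2| ≤ C ∧ |ux u p.1 p.2| ≤ C) ∧
  (∀ t > (0 : ℝ), Filter.Tendsto (fun x => u t x) Filter.atTop (nhds 0)) ∧
  (∀ t > (0 : ℝ), ∀ x ≥ (0 : ℝ), ut u t x = μ * ux u t x + (1 / 2) * uxx u t x) ∧
  (∀ x ≥ (0 : ℝ), u 0 x = f x) ∧
  (∀ t > (0 : ℝ), ut u t 0 = ν * ux u t 0)

/-- `f` is admissible initial data: `C¹` on `[0,∞)` with `f` and `f'` bounded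
and `f(x) → 0` as `x → ∞`. -/
def IsInitialData (f : ℝ → ℝ) : Prop :=
  ContDiffOn ℝ 1 f (Set.Ici 0) ∧
  (∃ C : ℝ, ∀ x ∈ Set.Ici (0 : ℝ), |f x| ≤ C ∧ |derivWithin f (Set.Ici 0) x| ≤ C) ∧
  Filter.Tendsto f Filter.atTop (nhds 0)


open Topology

set_option maxHeartbeats 1000000

/-! ### Basic facts about `phi` and `Psi` -/

lemma continuous_phi : Continuous phi := by
  unfold phi; fun_prop

lemma phi_nonneg (x : ℝ) : 0 ≤ phi x := by
  unfold phi; positivity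

lemma integrable_phi : Integrable phi := by
  have h := (integrable_exp_neg_mul_sq (by norm_num : (0:ℝ) < 1/2)).const_mul
    (1 / Real.sqrt (2 * Real.pi))
  refine h.congr (Filter.Eventually.of_forall fun x => ?_)
  unfold phi
  rw [show -x^2/2 = -(1/2)*x^2 by ring]

lemma Psi_sub {a b : ℝ} (hab : a ≤ b) : Psi a = (∫ y in a..b, phi y) + Psi b := by
  rw [intervalIntegral.integral_of_le hab, Psi, Psi,
    ← Set.Ioc_union_Ioi_eq_Ioi hab,
    setIntegral_union (Set.Ioc_disjoint_Ioi le_rfl) measurableSet_Ioi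
      integrable_phi.integrableOn integrable_phi.integrableOn]

lemma Psi_eq (x : ℝ) : Psi x = Psi 0 - ∫ y in (0:ℝ)..x, phi y := by
  rcases le_total 0 x with h | h
  · have := Psi_sub h; linarith
  · have h1 := Psi_sub h
    rw [intervalIntegral.integral_symm] at h1
    linarith

lemma hasDerivAt_Psi (x : ℝ) : HasDerivAt Psi (-phi x) x := by
  have h1 : HasDerivAt (fun x => ∫ y in (0:ℝ)..x, phi y) (phi x) x :=
    intervalIntegral.integral_hasDerivAt_right (integrable_phi.intervalIntegrable)
      (continuous_phi.stronglyMeasurable.stronglyMeasurableAtFilter)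
      continuous_phi.continuousAt
  have h2 : HasDerivAt (fun x => Psi 0 - ∫ y in (0:ℝ)..x, phi y) (-phi x) x := by
    exact ((hasDerivAt_const x (Psi 0)).sub h1).congr_deriv (by simp)
  rw [show Psi = fun x => Psi 0 - ∫ y in (0:ℝ)..x, phi y from funext Psi_eq]
  exact h2

lemma continuous_Psi : Continuous Psi :=
  continuous_iff_continuousAt.mpr fun x => (hasDerivAt_Psi x).continuousAt

lemma tendsto_Psi : Tendsto Psi atTop (𝓝 0) := by
  have h1 : Tendsto (fun x => ∫ y in (0:ℝ)..x, phi y) atTop (𝓝 (Psi 0)) :=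
    intervalIntegral_tendsto_integral_Ioi 0 integrable_phi.integrableOn tendsto_id
  have h2 : Tendsto (fun x => Psi 0 - ∫ y in (0:ℝ)..x, phi y) atTop (𝓝 (Psi 0 - Psi 0)) :=
    tendsto_const_nhds.sub h1
  rw [sub_self] at h2
  rw [show Psi = fun x => Psi 0 - ∫ y in (0:ℝ)..x, phi y from funext Psi_eq]
  exact h2

/-! ### Gaussian integrability -/

lemma integrable_gauss {a : ℝ} (ha : 0 < a) (d : ℝ) :
    Integrable (fun u : ℝ => Real.exp (-a*(u+d)^2)) := by
  have h := (integrable_exp_neg_mul_sq ha).comp_add_right d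
  simpa using h

lemma integrable_poly_gauss {a : ℝ} (ha : 0 < a) (c0 c1 c2 d : ℝ) :
    Integrable (fun u : ℝ => (c0 + c1*u + c2*u^2) * Real.exp (-a*(u+d)^2)) := by
  have hg : Integrable (fun u : ℝ =>
      (|c0| + |c1| + |c2|) * Real.exp (a*(d - 1/a)^2 - a*d^2) * Real.exp (-a*(u+(d - 1/a))^2)
      + (|c0| + |c1| + |c2|) * Real.exp (a*(d + 1/a)^2 - a*d^2)
          * Real.exp (-a*(u+(d + 1/a))^2)) :=
    ((integrable_gauss ha _).const_mul _).add ((integrable_gauss ha _).const_mul _)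
  refine hg.mono' (Continuous.aestronglyMeasurable (by fun_prop)) (Filter.Eventually.of_forall fun u => ?_)
  have e1 : |u| ≤ Real.exp |u| := by nlinarith [Real.add_one_le_exp |u|, abs_nonneg u]
  have e2 : u^2 ≤ Real.exp (2*|u|) := by
    calc u^2 = |u|^2 := (sq_abs u).symm
    _ ≤ (Real.exp |u|)^2 := pow_le_pow_left₀ (abs_nonneg u) e1 2
    _ = Real.exp (2*|u|) := by rw [sq, ← Real.exp_add]; ring_nf
  have e0 : (1:ℝ) ≤ Real.exp (2*|u|) := Real.one_le_exp (by positivity)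
  have e1' : |u| ≤ Real.exp (2*|u|) :=
    e1.trans (Real.exp_le_exp.mpr (by nlinarith [abs_nonneg u]))
  have e3 : Real.exp (2*|u|) ≤ Real.exp (2*u) + Real.exp (-(2*u)) := by
    rcases abs_cases u with h | h
    · rw [h.1]; exact le_add_of_nonneg_right (Real.exp_pos _).le
    · rw [h.1, show 2*(-u) = -(2*u) by ring]
      exact le_add_of_nonneg_left (Real.exp_pos _).le
  have habs : |c0 + c1*u + c2*u^2| ≤ |c0| + |c1| * |u| + |c2| * u^2 := by
    calc |c0 + c1*u + c2*u^2| ≤ |c0 + c1*u| + |c2*u^2| := abs_add_le _ _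
    _ ≤ |c0| + |c1*u| + |c2*u^2| := by linarith [abs_add_le c0 (c1*u)]
    _ = |c0| + |c1| * |u| + |c2| * u^2 := by rw [abs_mul, abs_mul, abs_pow, sq_abs]
  have h1 : |c0 + c1*u + c2*u^2|
      ≤ (|c0| + |c1| + |c2|) * (Real.exp (2*u) + Real.exp (-(2*u))) := by
    calc |c0 + c1*u + c2*u^2| ≤ |c0| + |c1| * |u| + |c2| * u^2 := habs
    _ ≤ |c0| * Real.exp (2*|u|) + |c1| * Real.exp (2*|u|) + |c2| * Real.exp (2*|u|) := by
        refine add_le_add (add_le_add ?_ ?_) ?_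
        · nlinarith [abs_nonneg c0]
        · exact mul_le_mul_of_nonneg_left e1' (abs_nonneg c1)
        · exact mul_le_mul_of_nonneg_left e2 (abs_nonneg c2)
    _ = (|c0| + |c1| + |c2|) * Real.exp (2*|u|) := by ring
    _ ≤ (|c0| + |c1| + |c2|) * (Real.exp (2*u) + Real.exp (-(2*u))) :=
        mul_le_mul_of_nonneg_left e3 (by positivity)
  have h2 : (Real.exp (2*u) + Real.exp (-(2*u))) * Real.exp (-a*(u+d)^2)
      = Real.exp (a*(d - 1/a)^2 - a*d^2) * Real.exp (-a*(u+(d - 1/a))^2)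
        + Real.exp (a*(d + 1/a)^2 - a*d^2) * Real.exp (-a*(u+(d + 1/a))^2) := by
    rw [add_mul, ← Real.exp_add, ← Real.exp_add, ← Real.exp_add, ← Real.exp_add]
    congr 1 <;> · congr 1; field_simp; ring
  have hexp : (0:ℝ) ≤ Real.exp (-a*(u+d)^2) := (Real.exp_pos _).le
  calc ‖(c0 + c1*u + c2*u^2) * Real.exp (-a*(u+d)^2)‖
      = |c0 + c1*u + c2*u^2| * Real.exp (-a*(u+d)^2) := by
        rw [norm_mul, Real.norm_eq_abs, Real.norm_eq_abs, abs_of_nonneg hexp]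
  _ ≤ ((|c0| + |c1| + |c2|) * (Real.exp (2*u) + Real.exp (-(2*u)))) * Real.exp (-a*(u+d)^2) :=
        mul_le_mul_of_nonneg_right h1 hexp
  _ = (|c0| + |c1| + |c2|) * ((Real.exp (2*u) + Real.exp (-(2*u))) * Real.exp (-a*(u+d)^2)) := by
        ring
  _ = _ := by rw [h2]; ring

/-! ### Exponent algebra and integrability on `Ioi` -/

lemma exp_split {t : ℝ} (ht : t ≠ 0) (c lam u : ℝ) :
    Real.exp (-(u+c)^2/(2*t) - lam*u) =
      Real.exp (lam*c + lam^2*t/2) * Real.exp (-(1/(2*t))*(u+(c+lam*t))^2) := by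
  rw [← Real.exp_add]; congr 1; field_simp; ring

lemma integrable_pg {t : ℝ} (ht : 0 < t) (c lam c0 c1 c2 : ℝ) :
    Integrable (fun u : ℝ => (c0 + c1*u + c2*u^2) * Real.exp (-(u+c)^2/(2*t) - lam*u)) := by
  have ha : 0 < 1/(2*t) := by positivity
  have h := integrable_poly_gauss ha (c0 * Real.exp (lam*c + lam^2*t/2))
    (c1 * Real.exp (lam*c + lam^2*t/2)) (c2 * Real.exp (lam*c + lam^2*t/2)) (c+lam*t)
  refine h.congr (Filter.Eventually.of_forall fun u => ?_)
  dsimp only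
  rw [exp_split ht.ne' c lam u]; ring

lemma integrable_pg' {t : ℝ} (ht : 0 < t) (c lam c0 c1 c2 : ℝ) {f : ℝ → ℝ}
    (hf : ∀ u, f u = (c0 + c1*u + c2*u^2) * Real.exp (-(u+c)^2/(2*t) - lam*u)) :
    IntegrableOn f (Set.Ioi 0) :=
  ((integrable_pg ht c lam c0 c1 c2).congr
    (Filter.Eventually.of_forall fun u => (hf u).symm)).integrableOn

/-! ### Tendsto lemmas -/

lemma tendsto_gauss {a : ℝ} (ha : 0 < a) (d : ℝ) :
    Tendsto (fun u : ℝ => Real.exp (-(a*(u+d)^2))) atTop (𝓝 0) := by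
  apply Real.tendsto_exp_atBot.comp
  have h1 : Tendsto (fun u : ℝ => u + d) atTop atTop := tendsto_atTop_add_const_right _ d tendsto_id
  have h2 : Tendsto (fun u : ℝ => (u+d)^2) atTop atTop :=
    (tendsto_pow_atTop (two_ne_zero)).comp h1
  have h3 : Tendsto (fun u : ℝ => a*(u+d)^2) atTop atTop := h2.const_mul_atTop ha
  exact (tendsto_neg_atTop_atBot).comp h3

lemma tendsto_mul_gauss {a : ℝ} (ha : 0 < a) (d : ℝ) :
    Tendsto (fun u : ℝ => u * Real.exp (-(a*(u+d)^2))) atTop (𝓝 0) := by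
  have key : Tendsto (fun u : ℝ => u * Real.exp (-u)) atTop (𝓝 0) := by
    simpa using Real.tendsto_pow_mul_exp_neg_atTop_nhds_zero 1
  refine squeeze_zero' ?_ ?_ key
  · filter_upwards [eventually_ge_atTop (0:ℝ)] with u hu
    positivity
  · filter_upwards [eventually_ge_atTop (0:ℝ), eventually_ge_atTop (2 * |d|),
      eventually_ge_atTop (4/a)] with u h0 h1 h2
    have h3 : u/2 ≤ u + d := by
      have := neg_abs_le d; linarith
    have h4 : (0:ℝ) ≤ u/2 := by linarith
    have h5 : (u/2)^2 ≤ (u+d)^2 := by nlinarith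
    have h6 : 4 ≤ a * u := by
      rw [div_le_iff₀ ha] at h2; linarith
    have hud : u ≤ a*(u+d)^2 := by nlinarith
    have := Real.exp_le_exp.mpr (neg_le_neg hud)
    exact mul_le_mul_of_nonneg_left this h0

/-! ### Gaussian integrals on `Ioi 0` via FTC -/

lemma gauss_int_one {t : ℝ} (ht : 0 < t) (c lam : ℝ) :
    ∫ u in Set.Ioi (0:ℝ), Real.exp (-(u+c)^2/(2*t) - lam*u)
      = Real.sqrt (2*Real.pi*t) * Real.exp (lam*c + lam^2*t/2) * Psi ((c+lam*t)/Real.sqrt t) := by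
  have hst : 0 < Real.sqrt t := Real.sqrt_pos.mpr ht
  have hs2pi : 0 < Real.sqrt (2*Real.pi) := Real.sqrt_pos.mpr (by positivity)
  have hsplit : Real.sqrt (2*Real.pi*t) = Real.sqrt (2*Real.pi) * Real.sqrt t :=
    Real.sqrt_mul (by positivity) t
  have hderiv : ∀ u : ℝ, HasDerivAt
      (fun u => -(Real.sqrt (2*Real.pi*t) * Real.exp (lam*c + lam^2*t/2)
        * Psi ((u+(c+lam*t))/Real.sqrt t)))
      (Real.exp (-(u+c)^2/(2*t) - lam*u)) u := by
    intro u
    have h1 : HasDerivAt (fun u : ℝ => (u+(c+lam*t))/Real.sqrt t) (1/Real.sqrt t) u := by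
      simpa using ((hasDerivAt_id u).add_const (c+lam*t)).div_const (Real.sqrt t)
    have h2 := (hasDerivAt_Psi ((u+(c+lam*t))/Real.sqrt t)).comp u h1
    have h3 := (h2.const_mul (Real.sqrt (2*Real.pi*t) * Real.exp (lam*c + lam^2*t/2))).neg
    refine h3.congr_deriv ?_
    rw [exp_split ht.ne' c lam u]
    unfold phi
    rw [hsplit, div_pow, Real.sq_sqrt ht.le]
    field_simp
  have hint : IntegrableOn (fun u => Real.exp (-(u+c)^2/(2*t) - lam*u)) (Set.Ioi 0) :=
    integrable_pg' ht c lam 1 0 0 (fun u => by ring)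
  have htend : Tendsto (fun u => -(Real.sqrt (2*Real.pi*t) * Real.exp (lam*c + lam^2*t/2)
      * Psi ((u+(c+lam*t))/Real.sqrt t))) atTop (𝓝 0) := by
    have h1 : Tendsto (fun u : ℝ => (u+(c+lam*t))/Real.sqrt t) atTop atTop :=
      (tendsto_atTop_add_const_right _ (c+lam*t) tendsto_id).atTop_div_const hst
    have h2 := (tendsto_Psi.comp h1).const_mul
      (Real.sqrt (2*Real.pi*t) * Real.exp (lam*c + lam^2*t/2))
    simpa using h2.neg
  have hval := integral_Ioi_of_hasDerivAt_of_tendsto' (fun u _ => hderiv u) hint htend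
  rw [hval]
  simp

lemma hasDerivAt_q (t c lam : ℝ) (u : ℝ) :
    HasDerivAt (fun u : ℝ => -(u+c)^2/(2*t) - lam*u) (-(2*(u+c)/(2*t)) - lam) u := by
  have h1 : HasDerivAt (fun u : ℝ => (u+c)^2) (2*(u+c)) u := by
    exact (((hasDerivAt_id u).add_const c).pow 2).congr_deriv (by simp only [id]; norm_num)
  have h3 := ((h1.div_const (2*t)).neg).sub ((hasDerivAt_id u).const_mul lam)
  have h5 := h3.congr_of_eventuallyEq
    (Filter.Eventually.of_forall (fun v => by simp only [id_eq, Pi.neg_apply, Pi.sub_apply]; ring) :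
      (fun u : ℝ => -(u+c)^2/(2*t) - lam*u) =ᶠ[𝓝 u] _)
  refine h5.congr_deriv ?_
  ring

lemma gauss_int_affine {t : ℝ} (ht : 0 < t) (c lam : ℝ) :
    ∫ u in Set.Ioi (0:ℝ), (u+(c+lam*t)) * Real.exp (-(u+c)^2/(2*t) - lam*u)
      = t * Real.exp (-c^2/(2*t)) := by
  have hderiv : ∀ u : ℝ, HasDerivAt (fun u : ℝ => -(t * Real.exp (-(u+c)^2/(2*t) - lam*u)))
      ((u+(c+lam*t)) * Real.exp (-(u+c)^2/(2*t) - lam*u)) u := by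
    intro u
    have h := (((hasDerivAt_q t c lam u).exp).const_mul t).neg
    refine h.congr_deriv ?_
    field_simp
    ring
  have hint : IntegrableOn (fun u : ℝ => (u+(c+lam*t)) * Real.exp (-(u+c)^2/(2*t) - lam*u))
      (Set.Ioi 0) := integrable_pg' ht c lam (c+lam*t) 1 0 (fun u => by ring)
  have htend : Tendsto (fun u : ℝ => -(t * Real.exp (-(u+c)^2/(2*t) - lam*u))) atTop (𝓝 0) := by
    have h1 := (((tendsto_gauss (show (0:ℝ) < 1/(2*t) by positivity) (c+lam*t)).const_mul
      (t * Real.exp (lam*c + lam^2*t/2))).neg)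
    have h2 : Tendsto (fun u : ℝ => -(t * Real.exp (-(u+c)^2/(2*t) - lam*u))) atTop
        (𝓝 (-(t * Real.exp (lam*c + lam^2*t/2) * 0))) :=
      h1.congr (fun u => by rw [exp_split ht.ne' c lam u]; ring_nf)
    simpa using h2
  have hval := integral_Ioi_of_hasDerivAt_of_tendsto' (fun u _ => hderiv u) hint htend
  rw [hval]
  norm_num

lemma gauss_int_quad {t : ℝ} (ht : 0 < t) (c lam : ℝ) :
    ∫ u in Set.Ioi (0:ℝ), (u*(u+(c+lam*t))/t - 1) * Real.exp (-(u+c)^2/(2*t) - lam*u) = 0 := by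
  have hderiv : ∀ u : ℝ, HasDerivAt (fun u : ℝ => -(u * Real.exp (-(u+c)^2/(2*t) - lam*u)))
      ((u*(u+(c+lam*t))/t - 1) * Real.exp (-(u+c)^2/(2*t) - lam*u)) u := by
    intro u
    have h0 := ((hasDerivAt_id u).mul ((hasDerivAt_q t c lam u).exp)).neg
    have h := h0.congr_of_eventuallyEq
      (Filter.Eventually.of_forall (fun v => by simp only [id_eq, Pi.neg_apply, Pi.mul_apply]) :
        (fun u : ℝ => -(u * Real.exp (-(u+c)^2/(2*t) - lam*u))) =ᶠ[𝓝 u] _)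
    refine h.congr_deriv ?_
    simp only [id_eq]
    field_simp
    ring
  have hint : IntegrableOn
      (fun u : ℝ => (u*(u+(c+lam*t))/t - 1) * Real.exp (-(u+c)^2/(2*t) - lam*u))
      (Set.Ioi 0) :=
    integrable_pg' ht c lam (-1) ((c+lam*t)/t) (1/t) (fun u => by field_simp; ring)
  have htend : Tendsto (fun u : ℝ => -(u * Real.exp (-(u+c)^2/(2*t) - lam*u))) atTop (𝓝 0) := by
    have h1 := (((tendsto_mul_gauss (show (0:ℝ) < 1/(2*t) by positivity) (c+lam*t)).const_mul
      (Real.exp (lam*c + lam^2*t/2))).neg)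
    have h2 : Tendsto (fun u : ℝ => -(u * Real.exp (-(u+c)^2/(2*t) - lam*u))) atTop
        (𝓝 (-(Real.exp (lam*c + lam^2*t/2) * 0))) :=
      h1.congr (fun u => by rw [exp_split ht.ne' c lam u]; ring_nf)
    simpa using h2
  have hval := integral_Ioi_of_hasDerivAt_of_tendsto' (fun u _ => hderiv u) hint htend
  rw [hval]
  norm_num

lemma gauss_int_lin {t : ℝ} (ht : 0 < t) (c lam : ℝ) :
    ∫ u in Set.Ioi (0:ℝ), (u+c) * Real.exp (-(u+c)^2/(2*t) - lam*u)
      = t * Real.exp (-c^2/(2*t))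
        - lam*t*(Real.sqrt (2*Real.pi*t) * Real.exp (lam*c + lam^2*t/2)
          * Psi ((c+lam*t)/Real.sqrt t)) := by
  have e : ∀ u : ℝ, (u+c) * Real.exp (-(u+c)^2/(2*t) - lam*u)
      = (u+(c+lam*t)) * Real.exp (-(u+c)^2/(2*t) - lam*u)
        - (lam*t) * Real.exp (-(u+c)^2/(2*t) - lam*u) := fun u => by ring
  rw [setIntegral_congr_fun measurableSet_Ioi fun u _ => e u]
  rw [integral_sub (integrable_pg' ht c lam (c+lam*t) 1 0 fun u => by ring)
      (integrable_pg' ht c lam (lam*t) 0 0 fun u => by ring)]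
  rw [integral_const_mul, gauss_int_affine ht c lam, gauss_int_one ht c lam]

lemma gauss_int_numu {t : ℝ} (ht : 0 < t) (c lam : ℝ) :
    ∫ u in Set.Ioi (0:ℝ), u*(u+c) * Real.exp (-(u+c)^2/(2*t) - lam*u)
      = t*(1+lam*(c+lam*t)) * (Real.sqrt (2*Real.pi*t) * Real.exp (lam*c + lam^2*t/2)
          * Psi ((c+lam*t)/Real.sqrt t))
        - lam*t^2*Real.exp (-c^2/(2*t)) := by
  have e : ∀ u : ℝ, u*(u+c) * Real.exp (-(u+c)^2/(2*t) - lam*u)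
      = t*((u*(u+(c+lam*t))/t - 1) * Real.exp (-(u+c)^2/(2*t) - lam*u))
          - (lam*t)*((u+(c+lam*t)) * Real.exp (-(u+c)^2/(2*t) - lam*u))
          + (t + lam*t*(c+lam*t)) * Real.exp (-(u+c)^2/(2*t) - lam*u) := fun u => by
    field_simp; ring
  have hA : IntegrableOn
      (fun u : ℝ => t*((u*(u+(c+lam*t))/t - 1) * Real.exp (-(u+c)^2/(2*t) - lam*u)))
      (Set.Ioi 0) := integrable_pg' ht c lam (-t) (c+lam*t) 1 (fun u => by field_simp; ring)
  have hB : IntegrableOn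
      (fun u : ℝ => (lam*t)*((u+(c+lam*t)) * Real.exp (-(u+c)^2/(2*t) - lam*u)))
      (Set.Ioi 0) := integrable_pg' ht c lam (lam*t*(c+lam*t)) (lam*t) 0 (fun u => by ring)
  have hC : IntegrableOn
      (fun u : ℝ => (t + lam*t*(c+lam*t)) * Real.exp (-(u+c)^2/(2*t) - lam*u))
      (Set.Ioi 0) := integrable_pg' ht c lam (t + lam*t*(c+lam*t)) 0 0 (fun u => by ring)
  have hAB : IntegrableOn
      (fun u : ℝ => t*((u*(u+(c+lam*t))/t - 1) * Real.exp (-(u+c)^2/(2*t) - lam*u))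
        - (lam*t)*((u+(c+lam*t)) * Real.exp (-(u+c)^2/(2*t) - lam*u))) (Set.Ioi 0) := hA.sub hB
  rw [setIntegral_congr_fun measurableSet_Ioi fun u _ => e u]
  rw [integral_add hAB hC, integral_sub hA hB, integral_const_mul, integral_const_mul,
    integral_const_mul, gauss_int_quad ht c lam, gauss_int_affine ht c lam,
    gauss_int_one ht c lam]
  ring

/-! ### The elapsed-exponential factor -/

noncomputable def Kfun (μ ν v : ℝ) : ℝ :=
  if ν = μ then v else (1 - Real.exp (-2*(ν-μ)*v))/(2*(ν-μ))

lemma Kfun_eq (μ ν v : ℝ) :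
    (∫ r in (0:ℝ)..v, Real.exp (-2*(ν-μ)*r)) = Kfun μ ν v := by
  unfold Kfun
  split_ifs with hvm
  · simp [hvm]
  · have hk : ν - μ ≠ 0 := sub_ne_zero.mpr hvm
    have hder : ∀ r : ℝ, HasDerivAt (fun r => (1 - Real.exp (-2*(ν-μ)*r))/(2*(ν-μ)))
        (Real.exp (-2*(ν-μ)*r)) r := by
      intro r
      have h1 : HasDerivAt (fun r : ℝ => -2*(ν-μ)*r) (-2*(ν-μ)) r := by
        simpa using (hasDerivAt_id r).const_mul (-2*(ν-μ))
      have h2 := ((hasDerivAt_const r (1:ℝ)).sub h1.exp).div_const (2*(ν-μ))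
      refine h2.congr_deriv ?_
      field_simp
      ring
    rw [intervalIntegral.integral_eq_sub_of_hasDerivAt (fun r _ => hder r)
      ((by fun_prop : Continuous fun r : ℝ => Real.exp (-2*(ν-μ)*r)).intervalIntegrable 0 v)]
    simp

lemma Kfun_zero (μ ν : ℝ) : Kfun μ ν 0 = 0 := by
  unfold Kfun; split_ifs <;> simp

lemma continuous_Kfun (μ ν : ℝ) : Continuous (Kfun μ ν) := by
  unfold Kfun; split_ifs <;> fun_prop

lemma Kfun_bound (μ ν : ℝ) {v : ℝ} (hv : 0 ≤ v) :
    |Kfun μ ν v| ≤ v * Real.exp (2 * |ν-μ| * v) := by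
  unfold Kfun
  split_ifs with hm
  · rw [abs_of_nonneg hv]
    exact le_mul_of_one_le_right hv (Real.one_le_exp (by positivity))
  · have hk : ν - μ ≠ 0 := sub_ne_zero.mpr hm
    have hk2 : |2*(ν-μ)| ≠ 0 := by
      simp only [ne_eq, abs_eq_zero]
      intro hcon
      exact hk (by linarith)
    have habs : |1 - Real.exp (-(2*(ν-μ)*v))| ≤ |2*(ν-μ)*v| * Real.exp |2*(ν-μ)*v| := by
      set w := 2*(ν-μ)*v with hw
      rcases le_or_gt 0 w with h | h
      · have h1 : Real.exp (-w) ≤ 1 := Real.exp_le_one_iff.mpr (by linarith)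
        have h2 : 1 - Real.exp (-w) ≤ w := by nlinarith [Real.add_one_le_exp (-w)]
        rw [abs_of_nonneg (by linarith), abs_of_nonneg h]
        have h5 : (1:ℝ) ≤ Real.exp w := Real.one_le_exp h
        nlinarith
      · have h1 : (1:ℝ) ≤ Real.exp (-w) := Real.one_le_exp (by linarith)
        have h4 : (w+1) * Real.exp (-w) ≤ 1 := by
          have h3 : Real.exp w * Real.exp (-w) = 1 := by rw [← Real.exp_add]; simp
          nlinarith [mul_le_mul_of_nonneg_right (Real.add_one_le_exp w) (Real.exp_pos (-w)).le]
        rw [abs_of_nonpos (by linarith : 1 - Real.exp (-w) ≤ 0), abs_of_neg h, neg_sub]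
        nlinarith
    have hab : |2*(ν-μ)*v| = 2 * |ν-μ| * v := by
      rw [abs_mul, abs_mul, abs_two, abs_of_nonneg hv]
    rw [hab] at habs
    rw [show -2*(ν-μ)*v = -(2*(ν-μ)*v) by ring, abs_div]
    rw [div_le_iff₀ (abs_pos.mpr (by simpa using hk2))]
    refine habs.trans (le_of_eq ?_)
    rw [abs_mul, abs_two]
    ring

/-! ### The kernel identity -/

lemma sqrt_fact1 : Real.sqrt (2/Real.pi) * Real.sqrt (2*Real.pi) = 2 := by
  rw [← Real.sqrt_mul (by positivity)]
  rw [show (2/Real.pi) * (2*Real.pi) = 4 by field_simp; ring]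
  rw [show (4:ℝ) = 2^2 by norm_num, Real.sqrt_sq (by norm_num)]

lemma sqrt_fact2 : Real.sqrt (2/Real.pi) = 2 / Real.sqrt (2*Real.pi) := by
  have hs2pi : 0 < Real.sqrt (2*Real.pi) := Real.sqrt_pos.mpr (by positivity)
  rw [eq_div_iff hs2pi.ne']
  exact sqrt_fact1

lemma rpow_fact {t : ℝ} (ht : 0 < t) : t ^ (-(3:ℝ)/2) = 1/(t * Real.sqrt t) := by
  rw [show (-(3:ℝ)/2) = -(3/2) by norm_num, Real.rpow_neg ht.le,
    show ((3:ℝ)/2) = 1 + 1/2 by norm_num, Real.rpow_add ht, Real.rpow_one,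
    ← Real.sqrt_eq_rpow, one_div]

lemma kernel_identity (μ ν : ℝ) {t x y : ℝ} (ht : 0 < t) (hx : 0 ≤ x) (hy : 0 ≤ y) :
    (∫ s in Set.Ioi x, Kfun μ ν (s - x) * gker μ t (s - y) s) = Hker μ ν t x y := by
  have hst : 0 < Real.sqrt t := Real.sqrt_pos.mpr ht
  have hs2pi : 0 < Real.sqrt (2*Real.pi) := Real.sqrt_pos.mpr (by positivity)
  have hsqq : Real.sqrt t * Real.sqrt t = t := Real.mul_self_sqrt ht.le
  have hsplitpi : Real.sqrt (2*Real.pi*t) = Real.sqrt (2*Real.pi) * Real.sqrt t :=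
    Real.sqrt_mul (by positivity) t
  -- change of variables s = u + x
  have him : (fun u : ℝ => u + x) '' Set.Ioi 0 = Set.Ioi x := by
    ext z
    simp only [Set.mem_image, Set.mem_Ioi]
    constructor
    · rintro ⟨u, hu, rfl⟩; linarith
    · intro hz; exact ⟨z - x, by linarith, by ring⟩
  have hmp := (measurePreserving_add_right volume x).setIntegral_image_emb
    (measurableEmbedding_addRight x) (fun s => Kfun μ ν (s - x) * gker μ t (s - y) s) (Set.Ioi 0)
  rw [him] at hmp
  rw [hmp]
  simp only [add_sub_cancel_right]
  by_cases hνμ : ν = μ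
  · subst hνμ
    have hintgr : ∀ u ∈ Set.Ioi (0:ℝ), Kfun ν ν u * gker ν t (u + x - y) (u + x)
        = (Real.sqrt (2/Real.pi) * t ^ (-(3:ℝ)/2) * Real.exp (ν*(y-x) - ν^2*t/2))
          * (u*(u+(x+y)) * Real.exp (-(u+(x+y))^2/(2*t) - ν*u)) := by
      intro u hu
      simp only [Set.mem_Ioi] at hu
      rw [show Kfun ν ν u = u from if_pos rfl]
      unfold gker
      rw [if_pos ⟨by linarith, by linarith⟩]
      rw [show 2*(u+x) - (u+x-y) = u+(x+y) by ring]
      rw [show Real.exp (-(u+(x+y))^2/(2*t) - ν*(u+x-y + ν*t/2))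
          = Real.exp (ν*(y-x) - ν^2*t/2) * Real.exp (-(u+(x+y))^2/(2*t) - ν*u) by
        rw [← Real.exp_add]; congr 1; ring]
      ring
    rw [setIntegral_congr_fun measurableSet_Ioi hintgr, integral_const_mul,
      gauss_int_numu ht (x+y) ν]
    unfold Hker
    rw [if_pos rfl]
    unfold phi
    have hG : Real.exp (-(x+y)^2/(2*t))
        = Real.exp (ν*(x+y) + ν^2*t/2) * Real.exp (-((x+y+ν*t)/Real.sqrt t)^2/2) := by
      rw [← Real.exp_add]; congr 1
      rw [div_pow, Real.sq_sqrt ht.le]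
      field_simp
      ring
    have hE1 : Real.exp (2*ν*y)
        = Real.exp (ν*(y-x) - ν^2*t/2) * Real.exp (ν*(x+y) + ν^2*t/2) := by
      rw [← Real.exp_add]; congr 1; ring
    rw [hG, hE1, rpow_fact ht, hsplitpi, sqrt_fact2]
    set st := Real.sqrt t with hstdef
    rw [show t = st*st from hsqq.symm]
    field_simp
  · have hδ : ν - μ ≠ 0 := sub_ne_zero.mpr hνμ
    have hintgr : ∀ u ∈ Set.Ioi (0:ℝ), Kfun μ ν u * gker μ t (u + x - y) (u + x)
        = (Real.sqrt (2/Real.pi) * t ^ (-(3:ℝ)/2) * Real.exp (μ*(y-x) - μ^2*t/2) / (2*(ν-μ)))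
            * ((u+(x+y)) * Real.exp (-(u+(x+y))^2/(2*t) - μ*u))
          - (Real.sqrt (2/Real.pi) * t ^ (-(3:ℝ)/2) * Real.exp (μ*(y-x) - μ^2*t/2) / (2*(ν-μ)))
            * ((u+(x+y)) * Real.exp (-(u+(x+y))^2/(2*t) - (2*ν-μ)*u)) := by
      intro u hu
      simp only [Set.mem_Ioi] at hu
      rw [show Kfun μ ν u = (1 - Real.exp (-2*(ν-μ)*u))/(2*(ν-μ)) from if_neg hνμ]
      unfold gker
      rw [if_pos ⟨by linarith, by linarith⟩]
      rw [show 2*(u+x) - (u+x-y) = u+(x+y) by ring]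
      rw [show Real.exp (-(u+(x+y))^2/(2*t) - μ*(u+x-y + μ*t/2))
          = Real.exp (μ*(y-x) - μ^2*t/2) * Real.exp (-(u+(x+y))^2/(2*t) - μ*u) by
        rw [← Real.exp_add]; congr 1; ring]
      rw [show Real.exp (-(u+(x+y))^2/(2*t) - (2*ν-μ)*u)
          = Real.exp (-2*(ν-μ)*u) * Real.exp (-(u+(x+y))^2/(2*t) - μ*u) by
        rw [← Real.exp_add]; congr 1; ring]
      field_simp
    have hA : IntegrableOn (fun u : ℝ =>
        (Real.sqrt (2/Real.pi) * t ^ (-(3:ℝ)/2) * Real.exp (μ*(y-x) - μ^2*t/2) / (2*(ν-μ)))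
          * ((u+(x+y)) * Real.exp (-(u+(x+y))^2/(2*t) - μ*u))) (Set.Ioi 0) := by
      set K := Real.sqrt (2/Real.pi) * t ^ (-(3:ℝ)/2) * Real.exp (μ*(y-x) - μ^2*t/2) / (2*(ν-μ))
      exact integrable_pg' ht (x+y) μ (K*(x+y)) K 0 (fun u => by ring)
    have hB : IntegrableOn (fun u : ℝ =>
        (Real.sqrt (2/Real.pi) * t ^ (-(3:ℝ)/2) * Real.exp (μ*(y-x) - μ^2*t/2) / (2*(ν-μ)))
          * ((u+(x+y)) * Real.exp (-(u+(x+y))^2/(2*t) - (2*ν-μ)*u))) (Set.Ioi 0) := by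
      set K := Real.sqrt (2/Real.pi) * t ^ (-(3:ℝ)/2) * Real.exp (μ*(y-x) - μ^2*t/2) / (2*(ν-μ))
      exact integrable_pg' ht (x+y) (2*ν-μ) (K*(x+y)) K 0 (fun u => by ring)
    rw [setIntegral_congr_fun measurableSet_Ioi hintgr, integral_sub hA hB,
      integral_const_mul, integral_const_mul, gauss_int_lin ht (x+y) μ,
      gauss_int_lin ht (x+y) (2*ν-μ)]
    unfold Hker
    rw [if_neg hνμ]
    have hE1 : Real.exp (2*μ*y)
        = Real.exp (μ*(y-x) - μ^2*t/2) * Real.exp (μ*(x+y) + μ^2*t/2) := by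
      rw [← Real.exp_add]; congr 1; ring
    have hE4 : Real.exp ((2*ν-μ)*(x+y) + (2*ν-μ)^2*t/2)
        = Real.exp (μ*(x+y) + μ^2*t/2) * Real.exp (2*(ν-μ)*(x+y+ν*t)) := by
      rw [← Real.exp_add]; congr 1; ring
    rw [hE1, hE4, rpow_fact ht, hsplitpi, sqrt_fact2]
    set st := Real.sqrt t with hstdef
    rw [show t = st*st from hsqq.symm]
    field_simp
    ring_nf

/-! ### Measurability and domination -/

lemma measurable_gker (μ t : ℝ) : Measurable fun p : ℝ × ℝ => gker μ t p.1 p.2 := by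
  unfold gker
  refine Measurable.ite ?_ (by fun_prop) measurable_const
  exact (measurableSet_le measurable_fst measurable_snd).inter
    (measurableSet_le measurable_const measurable_snd)

lemma W_bound (μ ν : ℝ) {t x C : ℝ} (ht : 0 < t) (hx : 0 ≤ x) (hC : 0 ≤ C)
    {h : ℝ → ℝ} (hb : ∀ z, |h z| ≤ C) {s y : ℝ} (hs : x < s) (hy : 0 < y) :
    |h y * (Kfun μ ν (s-x) * gker μ t (s-y) s)|
      ≤ (C * (Real.sqrt (2/Real.pi) * t ^ (-(3:ℝ)/2))
          * Real.exp ((|μ| + 2 * |ν-μ| + 2)^2*t))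
        * (Real.exp (-s^2/(4*t)) * Real.exp (-y^2/(4*t))) := by
  have hs0 : 0 < s := lt_of_le_of_lt hx hs
  have hv : 0 < s + y := by linarith
  have hCT : 0 ≤ Real.sqrt (2/Real.pi) * t ^ (-(3:ℝ)/2) := by positivity
  have hgk : gker μ t (s-y) s = (Real.sqrt (2/Real.pi) * t ^ (-(3:ℝ)/2))
      * ((s+y) * Real.exp (-(s+y)^2/(2*t) - μ*(s-y+μ*t/2))) := by
    unfold gker
    rw [if_pos ⟨by linarith, by linarith⟩, show 2*s - (s-y) = s+y by ring]
    ring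
  have hEq : (0:ℝ) ≤ Real.exp (-(s+y)^2/(2*t) - μ*(s-y+μ*t/2)) := (Real.exp_pos _).le
  have hKb : |Kfun μ ν (s-x)| ≤ (s+y) * Real.exp (2 * |ν-μ| * (s+y)) := by
    refine (Kfun_bound μ ν (by linarith : (0:ℝ) ≤ s - x)).trans ?_
    have h1 : s - x ≤ s + y := by linarith
    have h2 : Real.exp (2 * |ν-μ| * (s-x)) ≤ Real.exp (2 * |ν-μ| * (s+y)) := by
      apply Real.exp_le_exp.mpr
      nlinarith [abs_nonneg (ν-μ)]
    exact mul_le_mul h1 h2 (Real.exp_pos _).le (by linarith)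
  have hexpb : Real.exp (-(s+y)^2/(2*t) - μ*(s-y+μ*t/2))
      ≤ Real.exp (|μ| * (s+y) - (s+y)^2/(2*t)) := by
    apply Real.exp_le_exp.mpr
    have h1 : -(μ*(s-y)) ≤ |μ| * (s+y) := by
      have h2 : |s - y| ≤ s + y := abs_le.mpr ⟨by linarith, by linarith⟩
      calc -(μ*(s-y)) ≤ |μ * (s-y)| := neg_le_abs _
      _ = |μ| * |s-y| := abs_mul _ _
      _ ≤ |μ| * (s+y) := mul_le_mul_of_nonneg_left h2 (abs_nonneg μ)
    have h2 : (0:ℝ) ≤ μ^2*t/2 := by positivity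
    have h4 : (0:ℝ) ≤ |μ| * (s+y) + μ*(s-y) + μ^2*t/2 := by linarith
    have expand : |μ| * (s+y) - (s+y)^2/(2*t) - (-(s+y)^2/(2*t) - μ*(s-y+μ*t/2))
        = |μ| * (s+y) + μ*(s-y) + μ^2*t/2 := by ring
    linarith
  -- combine
  have hv1 : s+y ≤ Real.exp (s+y) := by nlinarith [Real.add_one_le_exp (s+y)]
  have e1 : (s+y)^2 ≤ Real.exp (2*(s+y)) := by
    calc (s+y)^2 ≤ (Real.exp (s+y))^2 := by nlinarith
    _ = Real.exp (2*(s+y)) := by rw [sq, ← Real.exp_add]; ring_nf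
  have e2 : (|μ| + 2 * |ν-μ| + 2)*(s+y) - (s+y)^2/(4*t) ≤ (|μ| + 2 * |ν-μ| + 2)^2*t := by
    have h4t : (0:ℝ) < 4*t := by positivity
    have hkey : (|μ| + 2 * |ν-μ| + 2)*(s+y) - (|μ| + 2 * |ν-μ| + 2)^2*t ≤ (s+y)^2/(4*t) := by
      rw [le_div_iff₀ h4t]
      nlinarith [sq_nonneg ((s+y) - 2*(|μ| + 2 * |ν-μ| + 2)*t)]
    linarith
  have e3 : Real.exp (-(s+y)^2/(4*t)) ≤ Real.exp (-s^2/(4*t)) * Real.exp (-y^2/(4*t)) := by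
    rw [← Real.exp_add]
    apply Real.exp_le_exp.mpr
    rw [← add_div]
    have h4t : (0:ℝ) < 4*t := by positivity
    rw [div_le_div_iff₀ h4t h4t]
    nlinarith [mul_pos hs0 hy]
  calc |h y * (Kfun μ ν (s-x) * gker μ t (s-y) s)|
      = |h y| * (|Kfun μ ν (s-x)| * gker μ t (s-y) s) := by
        rw [abs_mul, abs_mul, abs_of_nonneg (by rw [hgk]; positivity : (0:ℝ) ≤ gker μ t (s-y) s)]
  _ ≤ C * (((s+y) * Real.exp (2 * |ν-μ| * (s+y))) * gker μ t (s-y) s) := by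
        have hgk0 : (0:ℝ) ≤ gker μ t (s-y) s := by rw [hgk]; positivity
        refine mul_le_mul (hb y) (mul_le_mul_of_nonneg_right hKb hgk0) ?_ hC
        positivity
  _ = C * (Real.sqrt (2/Real.pi) * t ^ (-(3:ℝ)/2))
        * ((s+y)^2 * (Real.exp (2 * |ν-μ| * (s+y))
            * Real.exp (-(s+y)^2/(2*t) - μ*(s-y+μ*t/2)))) := by
        rw [hgk]; ring
  _ ≤ C * (Real.sqrt (2/Real.pi) * t ^ (-(3:ℝ)/2))
        * ((s+y)^2 * (Real.exp (2 * |ν-μ| * (s+y)) * Real.exp (|μ| * (s+y) - (s+y)^2/(2*t)))) := by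
        refine mul_le_mul_of_nonneg_left ?_ (by positivity)
        refine mul_le_mul_of_nonneg_left ?_ (by positivity)
        exact mul_le_mul_of_nonneg_left hexpb (Real.exp_pos _).le
  _ = C * (Real.sqrt (2/Real.pi) * t ^ (-(3:ℝ)/2))
        * ((s+y)^2 * Real.exp ((|μ| + 2 * |ν-μ|)*(s+y) - (s+y)^2/(2*t))) := by
        rw [← Real.exp_add]; ring_nf
  _ ≤ C * (Real.sqrt (2/Real.pi) * t ^ (-(3:ℝ)/2))
        * (Real.exp (2*(s+y)) * Real.exp ((|μ| + 2 * |ν-μ|)*(s+y) - (s+y)^2/(2*t))) := by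
        refine mul_le_mul_of_nonneg_left ?_ (by positivity)
        exact mul_le_mul_of_nonneg_right e1 (Real.exp_pos _).le
  _ = C * (Real.sqrt (2/Real.pi) * t ^ (-(3:ℝ)/2))
        * (Real.exp ((|μ| + 2 * |ν-μ| + 2)*(s+y) - (s+y)^2/(4*t))
            * Real.exp (-(s+y)^2/(4*t))) := by
        rw [← Real.exp_add, ← Real.exp_add]; congr 2; ring
  _ ≤ C * (Real.sqrt (2/Real.pi) * t ^ (-(3:ℝ)/2))
        * (Real.exp ((|μ| + 2 * |ν-μ| + 2)^2*t) * Real.exp (-(s+y)^2/(4*t))) := by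
        refine mul_le_mul_of_nonneg_left ?_ (by positivity)
        exact mul_le_mul_of_nonneg_right (Real.exp_le_exp.mpr e2) (Real.exp_pos _).le
  _ ≤ C * (Real.sqrt (2/Real.pi) * t ^ (-(3:ℝ)/2))
        * (Real.exp ((|μ| + 2 * |ν-μ| + 2)^2*t)
            * (Real.exp (-s^2/(4*t)) * Real.exp (-y^2/(4*t)))) := by
        refine mul_le_mul_of_nonneg_left ?_ (by positivity)
        exact mul_le_mul_of_nonneg_left e3 (Real.exp_pos _).le
  _ = (C * (Real.sqrt (2/Real.pi) * t ^ (-(3:ℝ)/2))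
          * Real.exp ((|μ| + 2 * |ν-μ| + 2)^2*t))
        * (Real.exp (-s^2/(4*t)) * Real.exp (-y^2/(4*t))) := by ring

/-! ### Main calculation -/

lemma main_calc (μ ν : ℝ) (h : ℝ → ℝ) (hc : Continuous h) (C : ℝ) (hb : ∀ z, |h z| ≤ C)
    {t x : ℝ} (ht : 0 < t) (hx : 0 ≤ x) :
    (∫ s in Set.Ioi (0:ℝ), ∫ b in Set.Iic s,
        h (max x s - b) * Kfun μ ν (max x s - x) * gker μ t b s)
      = ∫ y in Set.Ioi (0:ℝ), h y * Hker μ ν t x y := by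
  classical
  have hC : 0 ≤ C := (abs_nonneg _).trans (hb 0)
  set F : ℝ → ℝ := fun s => ∫ b in Set.Iic s,
      h (max x s - b) * Kfun μ ν (max x s - x) * gker μ t b s with hF
  -- Step 1: for 0 < s ≤ x the inner integral vanishes
  have hzero : ∀ s ∈ Set.Ioc (0:ℝ) x, F s = 0 := by
    intro s hs
    have hmax : max x s = x := max_eq_left hs.2
    rw [hF]
    simp only [hmax, sub_self, Kfun_zero, mul_zero, zero_mul]
    exact integral_zero _ _
  -- Step 2: restrict to Ioi x
  have hsplit : (∫ s in Set.Ioi (0:ℝ), F s) = ∫ s in Set.Ioi x, F s := by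
    have hae : ∀ᵐ s ∂(volume.restrict (Set.Ioi 0)), F s = (Set.Ioi x).indicator F s := by
      filter_upwards [ae_restrict_mem measurableSet_Ioi] with s hs
      by_cases hsx : x < s
      · rw [Set.indicator_of_mem (Set.mem_Ioi.mpr hsx)]
      · rw [Set.indicator_of_notMem (by simpa using hsx),
          hzero s ⟨hs, not_lt.mp hsx⟩]
    rw [integral_congr_ae hae, integral_indicator measurableSet_Ioi,
      Measure.restrict_restrict measurableSet_Ioi, Set.Ioi_inter_Ioi,
      sup_eq_left.mpr hx]
  -- Step 3: change of variables in the inner integral for s > x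
  have hFs : ∀ s ∈ Set.Ioi x, F s
      = ∫ y in Set.Ioi (0:ℝ), h y * (Kfun μ ν (s-x) * gker μ t (s-y) s) := by
    intro s hs
    rw [Set.mem_Ioi] at hs
    have hmax : max x s = s := max_eq_right (le_of_lt hs)
    have himg := (Measure.measurePreserving_sub_left volume s).setIntegral_image_emb
      (MeasurableEquiv.subLeft s).measurableEmbedding
      (fun y => h y * (Kfun μ ν (s-x) * gker μ t (s-y) s)) (Set.Iic s)
    rw [Set.image_const_sub_Iic, sub_self] at himg
    rw [hF]
    simp only [hmax]
    calc (∫ b in Set.Iic s, h (s - b) * Kfun μ ν (s - x) * gker μ t b s)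
        = ∫ b in Set.Iic s, h (s - b) * (Kfun μ ν (s-x) * gker μ t (s-(s-b)) s) := by
          refine setIntegral_congr_fun measurableSet_Iic (fun b _ => ?_)
          rw [sub_sub_cancel]; ring
    _ = ∫ y in Set.Ici (0:ℝ), h y * (Kfun μ ν (s-x) * gker μ t (s-y) s) := himg.symm
    _ = ∫ y in Set.Ioi (0:ℝ), h y * (Kfun μ ν (s-x) * gker μ t (s-y) s) :=
          integral_Ici_eq_integral_Ioi
  -- Step 4: Fubini
  have hWmeas : Measurable fun p : ℝ × ℝ =>
      h p.2 * (Kfun μ ν (p.1-x) * gker μ t (p.1-p.2) p.1) := by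
    have m0 : Measurable fun p : ℝ×ℝ => (p.1 - p.2, p.1) :=
      (measurable_fst.sub measurable_snd).prodMk measurable_fst
    have m1 : Measurable fun p : ℝ×ℝ => gker μ t (p.1-p.2) p.1 :=
      (measurable_gker μ t).comp m0
    exact ((hc.comp continuous_snd).measurable).mul
      ((((continuous_Kfun μ ν).comp (continuous_fst.sub continuous_const)).measurable).mul m1)
  have hWint : Integrable (fun p : ℝ × ℝ =>
      h p.2 * (Kfun μ ν (p.1-x) * gker μ t (p.1-p.2) p.1))
      ((volume.restrict (Set.Ioi x)).prod (volume.restrict (Set.Ioi 0))) := by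
    rw [Measure.prod_restrict]
    have g1 : Integrable (fun u : ℝ => Real.exp (-u^2/(4*t))) := by
      have hg := integrable_exp_neg_mul_sq (show (0:ℝ) < 1/(4*t) by positivity)
      refine hg.congr (Filter.Eventually.of_forall fun u => ?_)
      dsimp only
      rw [show -(1/(4*t))*u^2 = -u^2/(4*t) by ring]
    have hint : Integrable (fun p : ℝ×ℝ =>
        (C * (Real.sqrt (2/Real.pi) * t ^ (-(3:ℝ)/2))
            * Real.exp ((|μ| + 2 * |ν-μ| + 2)^2*t))
          * (Real.exp (-p.1^2/(4*t)) * Real.exp (-p.2^2/(4*t)))) (volume.prod volume) :=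
      (g1.mul_prod g1).const_mul _
    refine Integrable.mono' hint.restrict hWmeas.aestronglyMeasurable ?_
    filter_upwards [ae_restrict_mem (measurableSet_Ioi.prod measurableSet_Ioi)] with p hp
    rw [Real.norm_eq_abs]
    exact W_bound μ ν ht hx hC hb hp.1 hp.2
  calc (∫ s in Set.Ioi (0:ℝ), F s) = ∫ s in Set.Ioi x, F s := hsplit
  _ = ∫ s in Set.Ioi x, ∫ y in Set.Ioi (0:ℝ),
        h y * (Kfun μ ν (s-x) * gker μ t (s-y) s) :=
      setIntegral_congr_fun measurableSet_Ioi hFs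
  _ = ∫ y in Set.Ioi (0:ℝ), ∫ s in Set.Ioi x,
        h y * (Kfun μ ν (s-x) * gker μ t (s-y) s) := integral_integral_swap hWint
  _ = ∫ y in Set.Ioi (0:ℝ), h y * Hker μ ν t x y := by
      refine setIntegral_congr_fun measurableSet_Ioi (fun y hy => ?_)
      rw [Set.mem_Ioi] at hy
      rw [integral_const_mul, kernel_identity μ ν ht hx (le_of_lt hy)]


/-- the joint functional of the reflecting Brownian motion and
its local time is given by the kernel `H`. -/
theorem double_integral_eq_H_integral (μ ν : ℝ) (h : ℝ → ℝ)
    (hc : ContinuousOn h (Set.Ici 0)) (hb : ∃ C : ℝ, ∀ x ≥ (0 : ℝ), |h x| ≤ C) :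
    ∀ t > (0 : ℝ), ∀ x ≥ (0 : ℝ),
      (∫ s in Set.Ioi (0 : ℝ), ∫ b in Set.Iic s,
          h (max x s - b) *
            (∫ r in (0 : ℝ)..(max x s - x), Real.exp (-2 * (ν - μ) * r)) *
            gker μ t b s) =
        ∫ y in Set.Ioi (0 : ℝ), h y * Hker μ ν t x y := by
  obtain ⟨C, hC⟩ := hb
  intro t ht x hx
  simp only [Kfun_eq]
  have hc' : Continuous (fun z : ℝ => h |z|) :=
    hc.comp_continuous continuous_abs (fun z => Set.mem_Ici.mpr (abs_nonneg z))
  have hb' : ∀ z : ℝ, |(fun z : ℝ => h |z|) z| ≤ C := fun z => hC |z| (abs_nonneg z)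
  have hL : (∫ s in Set.Ioi (0:ℝ), ∫ b in Set.Iic s,
      h (max x s - b) * Kfun μ ν (max x s - x) * gker μ t b s)
      = ∫ s in Set.Ioi (0:ℝ), ∫ b in Set.Iic s,
          (fun z : ℝ => h |z|) (max x s - b) * Kfun μ ν (max x s - x) * gker μ t b s := by
    refine setIntegral_congr_fun measurableSet_Ioi (fun s _ => ?_)
    refine setIntegral_congr_fun measurableSet_Iic (fun b hbb => ?_)
    rw [Set.mem_Iic] at hbb
    have hnn : 0 ≤ max x s - b := by
      have := le_max_right x s; linarith
    simp only [abs_of_nonneg hnn]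
  have hR : (∫ y in Set.Ioi (0:ℝ), h y * Hker μ ν t x y)
      = ∫ y in Set.Ioi (0:ℝ), (fun z : ℝ => h |z|) y * Hker μ ν t x y := by
    refine setIntegral_congr_fun measurableSet_Ioi (fun y hy => ?_)
    rw [Set.mem_Ioi] at hy
    simp only [abs_of_nonneg hy.le]
  rw [hL, hR]
  exact main_calc μ ν (fun z : ℝ => h |z|) hc' C hb' ht hx
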